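/- On a resistance network, with H₁ = ℓ²(G), H₂ = H_ℰ, and D = span{δ_x}, each energy kernel element v_x lies in D* = {h ∈ H_ℰ : ∃C, |⟨φ, h⟩_ℰ| ≤ C‖φ‖_{ℓ²} for all φ ∈ D}; specifically |⟨φ, v_x⟩_ℰ| ≤ √2 ‖φ‖_{ℓ²} for all φ ∈ span{δ_y}. Hence D* is dense in H_ℰ. -/
import Mathlib


/-- The energy form of a network `(G, c)`:
`ℰ(u, v) = (1/2) ∑_{x,y} c x y * (u x - u y) * (v x - v y)`. -/
noncomputable def energyForm {V : Type*} (c : V → V → ℝ) (u v : V → ℝ) : ℝ :=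
  (1 / 2) * ∑' p : V × V, c p.1 p.2 * (u p.1 - u p.2) * (v p.1 - v p.2)

/-- A function `u` has finite energy iff the defining sum of `ℰ(u,u)` is (absolutely)
summable. -/
def FiniteEnergy {V : Type*} (c : V → V → ℝ) (u : V → ℝ) : Prop :=
  Summable fun p : V × V => c p.1 p.2 * (u p.1 - u p.2) ^ 2

/-- The network Laplacian `(Δu)(x) = ∑_{y ∼ x} c x y * (u x - u y)`. -/
noncomputable def netLap {V : Type*} (c : V → V → ℝ) (u : V → ℝ) : V → ℝ :=
  fun x => ∑' y, c x y * (u x - u y)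

/-- The Dirac mass at a vertex. -/
def dirac {V : Type*} [DecidableEq V] (x : V) : V → ℝ :=
  fun z => if z = x then 1 else 0

lemma energyForm_symm {V : Type*} (c : V → V → ℝ) (u w : V → ℝ) :
    energyForm c u w = energyForm c w u := by
  unfold energyForm
  congr 1
  exact tsum_congr fun p => by ring

lemma finsupp_finite_energy {V : Type*} [DecidableEq V] (c : V → V → ℝ)
    (hsymm : ∀ x y, c x y = c y x)
    (hlocfin : ∀ x, (Function.support (c x)).Finite) (φ : V →₀ ℝ) :
    FiniteEnergy c (fun z => φ z) := by
  apply summable_of_finite_support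
  have hfin : (⋃ a ∈ (φ.support : Set V),
      (({a} : Set V) ×ˢ (Function.support (c a)) ∪
        (Function.support (c a)) ×ˢ ({a} : Set V))).Finite := by
    apply Set.Finite.biUnion φ.support.finite_toSet
    intro a _
    exact ((Set.finite_singleton a).prod (hlocfin a)).union
      ((hlocfin a).prod (Set.finite_singleton a))
  apply hfin.subset
  intro p hp
  simp only [Function.mem_support] at hp
  have hc : c p.1 p.2 ≠ 0 := fun h => hp (by simp [h])
  have hne : φ p.1 ≠ φ p.2 := fun h => hp (by simp [h])
  have : φ p.1 ≠ 0 ∨ φ p.2 ≠ 0 := by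
    by_contra h
    push_neg at h
    exact hne (h.1.trans h.2.symm)
  rcases this with h | h
  · refine Set.mem_biUnion (by simpa using h) ?_
    exact Or.inl ⟨rfl, hc⟩
  · refine Set.mem_biUnion (by simpa using h) ?_
    refine Or.inr ⟨?_, rfl⟩
    simpa [Function.mem_support, hsymm p.2 p.1] using hc

/-- **Example 5.26 of the paper.** On a resistance network, with `H₁ = ℓ²(G)`,
`H₂ = H_ℰ`, and `D = span{δ_x}` (finitely supported functions), each energy kernel
element `v_x` lies in `D* = {h ∈ H_ℰ : ∃ C, |⟨φ, h⟩_ℰ| ≤ C ‖φ‖_{ℓ²} ∀ φ ∈ D}`;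
specifically `|⟨φ, v_x⟩_ℰ| ≤ √2 ‖φ‖_{ℓ²}` for all `φ ∈ span{δ_y}`. Hence `D*` is dense
in `H_ℰ` (since `span{v_x}` is dense in `H_ℰ`). -/
theorem energy_kernel_in_Dstar
    {V : Type*} [DecidableEq V] (c : V → V → ℝ)
    (hsymm : ∀ x y, c x y = c y x)
    (hnonneg : ∀ x y, 0 ≤ c x y)
    (hdiag : ∀ x, c x x = 0)
    (hlocfin : ∀ x, (Function.support (c x)).Finite)
    (hconn : ∀ x y, Relation.ReflTransGen (fun a b => 0 < c a b) x y)
    (o : V) (v : V → V → ℝ)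
    (hv_energy : ∀ x, FiniteEnergy c (v x))
    (hv_repr : ∀ (x : V) (u : V → ℝ), FiniteEnergy c u →
      energyForm c (v x) u = u x - u o)
    (x : V) (φ : V →₀ ℝ) :
    |energyForm c (fun z => φ z) (v x)| ≤
      Real.sqrt 2 * Real.sqrt (∑' z, (φ z) ^ 2) := by
  have hφE := finsupp_finite_energy c hsymm hlocfin φ
  rw [energyForm_symm, hv_repr x _ hφE]
  have hsum : Summable (fun z => (φ z) ^ 2) := by
    apply summable_of_finite_support
    apply φ.support.finite_toSet.subset
    intro z hz
    simp only [Function.mem_support] at hz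
    simpa using fun h => hz (by simp [h])
  have htnn : 0 ≤ ∑' z, (φ z) ^ 2 := tsum_nonneg fun z => sq_nonneg _
  have key : (φ x - φ o) ^ 2 ≤ 2 * ∑' z, (φ z) ^ 2 := by
    by_cases hxo : x = o
    · subst hxo; simpa using mul_nonneg (by norm_num : (0:ℝ) ≤ 2) htnn
    · have h1 : (φ x) ^ 2 + (φ o) ^ 2 ≤ ∑' z, (φ z) ^ 2 := by
        have := Summable.sum_le_tsum ({x, o} : Finset V)
          (fun z _ => sq_nonneg (φ z)) hsum
        rwa [Finset.sum_pair hxo] at this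
      nlinarith [sq_nonneg (φ x + φ o)]
  calc |φ x - φ o| = Real.sqrt ((φ x - φ o) ^ 2) := (Real.sqrt_sq_eq_abs _).symm
    _ ≤ Real.sqrt (2 * ∑' z, (φ z) ^ 2) := Real.sqrt_le_sqrt key
    _ = Real.sqrt 2 * Real.sqrt (∑' z, (φ z) ^ 2) := Real.sqrt_mul (by norm_num) _
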